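/- Let 2^k ≤ n < 2^{k+1} and let 0 = x_0 < x_1 < ... < x_n < 1 be the sorted first n van der Corput points in base 2 together with 0. Suppose x_t = a/2^{k+1} with a odd. Then for every r ≥ 1 with t + r ≤ n, we have x_{t+r} − x_t ≥ x_{t−1+r} − x_{t−1}. -/

import Mathlib

/-!
For `m < 2 ^ K`, `vdc m` is the bit reversal of `m` divided by `2 ^ K`, so the first `2 ^ K` points
are exactly the multiples of `2⁻ᴷ` in `[0, 1)`, and all `n < 2 ^ (k + 1)` points lie on the grid of
mesh `2⁻⁽ᵏ⁺¹⁾`. Hence consecutive sorted points are at least `2⁻⁽ᵏ⁺¹⁾` apart. Since `n ≥ 2 ^ k` and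
`a` is odd, `(a - 1) / 2 ^ (k + 1)` is a multiple of `2⁻ᵏ` and so occurs among the points; the gap
ending at `x t` is therefore at most `2⁻⁽ᵏ⁺¹⁾`, hence at most any later gap.
-/

noncomputable def vdc (m : ℕ) : ℝ :=
  ∑ j ∈ Finset.range m, if m.testBit j then (1 : ℝ) / 2 ^ (j + 1) else 0

theorem vdc_eq_sum_range {m N : ℕ} (h : m ≤ N) :
    vdc m = ∑ j ∈ Finset.range N, if m.testBit j then (1 : ℝ) / 2 ^ (j + 1) else 0 := by
  refine Finset.sum_subset (Finset.range_subset_range.2 h) fun j _ hj => ?_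
  rw [Nat.testBit_lt_two_pow (lt_of_le_of_lt (not_lt.1 (Finset.mem_range.not.1 hj))
    Nat.lt_two_pow_self), if_neg Bool.false_ne_true]

@[simp]
theorem vdc_zero : vdc 0 = 0 := by simp [vdc]

theorem vdc_eq (m : ℕ) : vdc m = ((m % 2 : ℕ) + vdc (m / 2)) / 2 := by
  rw [vdc_eq_sum_range (Nat.le_succ m), vdc_eq_sum_range (Nat.div_le_self m 2),
    Finset.sum_range_succ', add_comm, add_div, Finset.sum_div]
  congr 1
  · rcases Nat.mod_two_eq_zero_or_one m with h | h <;> simp [Nat.testBit_zero, h]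
  · refine Finset.sum_congr rfl fun j _ => ?_
    rw [Nat.testBit_add_one]
    split_ifs <;> ring

theorem add_div_two_pow_div_two (c j K : ℕ) :
    ((c : ℝ) + j / 2 ^ K) / 2 = ((c * 2 ^ K + j : ℕ) : ℝ) / 2 ^ (K + 1) := by
  push_cast
  field_simp
  ring

theorem vdc_eq_div_two_pow {K m : ℕ} (hm : m < 2 ^ K) :
    ∃ j : ℕ, j < 2 ^ K ∧ vdc m = j / 2 ^ K := by
  induction K generalizing m with
  | zero => exact ⟨0, by simp, by simp [Nat.lt_one_iff.1 hm]⟩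
  | succ K ih =>
    rw [pow_succ] at hm ⊢
    obtain ⟨j, hj, hvdc⟩ := ih (m := m / 2) (by omega)
    have : m % 2 * 2 ^ K ≤ 2 ^ K := mul_le_of_le_one_left (Nat.zero_le _) (by omega)
    refine ⟨m % 2 * 2 ^ K + j, by omega, ?_⟩
    rw [vdc_eq, hvdc, add_div_two_pow_div_two]

theorem exists_vdc_eq_div_two_pow {K j : ℕ} (hj : j < 2 ^ K) :
    ∃ m : ℕ, m < 2 ^ K ∧ vdc m = j / 2 ^ K := by
  induction K generalizing j with
  | zero => exact ⟨0, by simp, by simp [Nat.lt_one_iff.1 hj]⟩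
  | succ K ih =>
    have hbit : j / 2 ^ K < 2 := Nat.div_lt_of_lt_mul (by rwa [← pow_succ])
    obtain ⟨m, hm, hvdc⟩ := ih (Nat.mod_lt j (by positivity : 2 ^ K > 0))
    refine ⟨2 * m + j / 2 ^ K, by rw [pow_succ]; omega, ?_⟩
    generalize hc : j / 2 ^ K = c at hbit
    rw [vdc_eq, show (2 * m + c) % 2 = c by omega, show (2 * m + c) / 2 = m by omega, hvdc,
      add_div_two_pow_div_two, ← hc, Nat.div_add_mod']

theorem one_div_le_sub_of_div_lt {D : ℝ} (hD : 0 < D) {p q : ℕ} (h : (p : ℝ) / D < q / D) :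
    1 / D ≤ q / D - p / D := by
  have hpq : (p : ℝ) + 1 ≤ q := by exact_mod_cast (div_lt_div_iff_of_pos_right hD).1 h
  rw [← sub_div]
  gcongr
  linarith

section SortedGrid

variable {x : ℕ → ℝ} {n : ℕ} {D : ℝ}

theorem one_div_le_sub_of_grid (hx : StrictMonoOn x (Set.Iic n)) (hD : 0 < D)
    (hgrid : ∀ i ≤ n, ∃ p : ℕ, x i = p / D) {i j : ℕ} (hij : i < j) (hj : j ≤ n) :
    1 / D ≤ x j - x i := by
  obtain ⟨p, hp⟩ := hgrid i (by omega)
  obtain ⟨q, hq⟩ := hgrid j hj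
  rw [hp, hq]
  exact one_div_le_sub_of_div_lt hD (hp ▸ hq ▸ hx (by simp; omega) (by simpa) hij)

theorem sub_pred_le_sub_pred_add (hx : StrictMonoOn x (Set.Iic n)) (hD : 0 < D)
    (hgrid : ∀ i ≤ n, ∃ p : ℕ, x i = p / D) {t r : ℕ} (htr : t + r ≤ n)
    (hprev : ∃ i ≤ n, x i = x t - 1 / D) :
    x (t - 1 + r) - x (t - 1) ≤ x (t + r) - x t := by
  obtain ⟨i, hi, hxi⟩ := hprev
  have hit : i < t :=
    (hx.lt_iff_lt hi (by simp; omega)).1 (by rw [hxi]; linarith [one_div_pos.2 hD])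
  have step_t : x t - x (t - 1) ≤ 1 / D := by
    linarith [hx.monotoneOn hi (by simp; omega) (by omega : i ≤ t - 1)]
  linarith [one_div_le_sub_of_grid hx hD hgrid (by omega : t - 1 + r < t + r) htr]

end SortedGrid

theorem image_Iic_eq_image_vdc {x : ℕ → ℝ} {n : ℕ}
    (himg : ∀ y : ℝ, (∃ i, i ≤ n ∧ x i = y) ↔ (y = 0 ∨ ∃ m, 1 ≤ m ∧ m ≤ n ∧ vdc m = y)) :
    x '' Set.Iic n = vdc '' Set.Iic n := by
  ext y
  simp only [Set.mem_image, Set.mem_Iic, himg]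
  constructor
  · rintro (rfl | ⟨m, -, hm, rfl⟩)
    exacts [⟨0, Nat.zero_le n, vdc_zero⟩, ⟨m, hm, rfl⟩]
  · rintro ⟨m, hm, rfl⟩
    rcases m.eq_zero_or_pos with rfl | hm0
    exacts [Or.inl vdc_zero, Or.inr ⟨m, hm0, hm, rfl⟩]

theorem stmt_12_general (k n : ℕ) (h1 : 2 ^ k ≤ n) (h2 : n < 2 ^ (k + 1)) (x : ℕ → ℝ)
    (hmono : ∀ i j, i < j → j ≤ n → x i < x j)
    (himg : ∀ y : ℝ, (∃ i, i ≤ n ∧ x i = y) ↔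
      (y = 0 ∨ ∃ m, 1 ≤ m ∧ m ≤ n ∧ vdc m = y))
    (t : ℕ) (a : ℕ) (ha : Odd a)
    (hxt : x t = (a : ℝ) / 2 ^ (k + 1)) :
    ∀ r, 1 ≤ r → t + r ≤ n →
      x (t + r) - x t ≥ x (t - 1 + r) - x (t - 1) := by
  intro r _ htr
  have hx : StrictMonoOn x (Set.Iic n) := fun i _ j hj hij => hmono i j hij hj
  have hrange := image_Iic_eq_image_vdc himg
  have hgrid : ∀ i ≤ n, ∃ p : ℕ, p < 2 ^ (k + 1) ∧ x i = p / 2 ^ (k + 1) := by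
    intro i hi
    obtain ⟨m, hm, hvdc⟩ : x i ∈ vdc '' Set.Iic n := hrange ▸ Set.mem_image_of_mem x hi
    exact hvdc ▸ vdc_eq_div_two_pow (by simp at hm; omega)
  obtain ⟨b, rfl⟩ := ha
  have hb : b < 2 ^ k := by
    obtain ⟨p, hp, hxp⟩ := hgrid t (by omega)
    rw [hxt, div_left_inj' (by positivity), Nat.cast_inj] at hxp
    rw [pow_succ] at hp
    omega
  obtain ⟨m, hm, hvdc⟩ := exists_vdc_eq_div_two_pow hb
  obtain ⟨i, hi, hxi⟩ : vdc m ∈ x '' Set.Iic n :=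
    hrange ▸ Set.mem_image_of_mem vdc (by simp; omega)
  refine sub_pred_le_sub_pred_add hx (by positivity)
    (fun i hi => (hgrid i hi).imp fun _ => And.right) htr ⟨i, hi, ?_⟩
  rw [hxi, hvdc, hxt, pow_succ]
  push_cast
  field_simp
  ring

theorem stmt_12 (k n : ℕ) (h1 : 2 ^ k ≤ n) (h2 : n < 2 ^ (k + 1)) (x : ℕ → ℝ)
    (hx0 : x 0 = 0)
    (hmono : ∀ i j, i < j → j ≤ n → x i < x j)
    (hlt1 : x n < 1)
    (himg : ∀ y : ℝ, (∃ i, i ≤ n ∧ x i = y) ↔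
      (y = 0 ∨ ∃ m, 1 ≤ m ∧ m ≤ n ∧ vdc m = y))
    (t : ℕ) (ht : 1 ≤ t) (a : ℕ) (ha : Odd a)
    (hxt : x t = (a : ℝ) / 2 ^ (k + 1)) :
    ∀ r, 1 ≤ r → t + r ≤ n →
      x (t + r) - x t ≥ x (t - 1 + r) - x (t - 1) :=
  stmt_12_general k n h1 h2 x hmono himg t a ha hxt
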